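/- Let {P_θ : θ ∈ Θ} be Markov kernels on a Polish space X and θ_n(ω) a Θ-valued random sequence. Assume (a) for every bounded continuous f, the family {P_θ f : θ ∈ Θ} is equicontinuous, and (b) there exists θ_⋆ and for each x a ℙ-full set Ω_x on which P_{θ_n(ω)}(x,·) converges weakly to P_{θ_⋆}(x,·). Then there exists a single ℙ-full set Ω_⋆ such that for all ω ∈ Ω_⋆, all x ∈ X and all k ≥ 1, the measures P_{θ_n(ω)}^k(x,·) converge weakly to P_{θ_⋆}^k(x,·). -/

import Mathlib

/-! Convergence holds almost surely simultaneously at all points of a countable dense set, and,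
for an equicontinuous family with continuous limit, the set of points of convergence is closed;
this gives one full set for all `x`. On it we induct on `k` via `P^{k+1} f = P^k (P f)`: the
functions `P_{θ_n} f` are equicontinuous, uniformly bounded and converge pointwise to
`P_{θ⋆} f`, and integrating such a sequence against weakly convergent measures converges to
the integral of the limit. -/

open MeasureTheory ProbabilityTheory Filter
open scoped ProbabilityTheory

noncomputable def iterKernel {X : Type*} [MeasurableSpace X] (P : Kernel X X) : ℕ → Kernel X X
  | 0 => Kernel.id
  | n + 1 => P ∘ₖ iterKernel P n

open Set Topology

section Equicontinuity

variable {ι X : Type*} [TopologicalSpace X]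

lemma Equicontinuous.tendsto_of_dense {α : Type*} [UniformSpace α] {l : Filter ι}
    {F : ι → X → α} {f : X → α} (hF : Equicontinuous F) (hf : Continuous f) {D : Set X}
    (hD : Dense D) (h : ∀ x ∈ D, Tendsto (F · x) l (𝓝 (f x))) (x : X) :
    Tendsto (F · x) l (𝓝 (f x)) :=
  (hF.isClosed_setOfPred_tendsto hf).closure_subset_iff.2 h (hD.closure_eq ▸ mem_univ x)

lemma Equicontinuous.abs_sub {F : ι → X → ℝ} {f : X → ℝ} (hF : Equicontinuous F)
    (hf : Continuous f) : Equicontinuous fun i x => |F i x - f x| := fun x₀ => by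
  have hFx₀ := hF x₀
  rw [Metric.equicontinuousAt_iff_right] at hFx₀ ⊢
  intro ε hε
  filter_upwards [hFx₀ (ε / 2) (half_pos hε),
    Metric.tendsto_nhds.1 (hf.tendsto x₀) (ε / 2) (half_pos hε)] with x hFx hfx i
  calc dist |F i x₀ - f x₀| |F i x - f x| ≤ dist (F i x₀ - f x₀) (F i x - f x) :=
        abs_abs_sub_abs_le _ _
    _ ≤ dist (F i x₀) (F i x) + dist (f x₀) (f x) := dist_sub_sub_le _ _ _ _
    _ < ε := by rw [dist_comm (f x₀)]; linarith [hFx i]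

lemma Equicontinuous.continuous_iSup [Nonempty ι] {F : ι → X → ℝ} (hF : Equicontinuous F)
    (hbdd : ∀ x, BddAbove (range (F · x))) : Continuous fun x => ⨆ i, F i x := by
  refine continuous_iff_continuousAt.2 fun x₀ => Metric.tendsto_nhds.2 fun ε hε => ?_
  filter_upwards [Metric.equicontinuousAt_iff_right.1 (hF x₀) (ε / 2) (half_pos hε)] with x hx
  have hclose : ∀ i, |F i x₀ - F i x| < ε / 2 := hx
  have hle : ⨆ i, F i x ≤ (⨆ i, F i x₀) + ε / 2 := ciSup_le fun i => by
    linarith [le_ciSup (hbdd x₀) i, (abs_lt.1 (hclose i)).1]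
  have hge : ⨆ i, F i x₀ ≤ (⨆ i, F i x) + ε / 2 := ciSup_le fun i => by
    linarith [le_ciSup (hbdd x) i, (abs_lt.1 (hclose i)).2]
  rw [Real.dist_eq, abs_lt]
  constructor <;> linarith

end Equicontinuity

lemma tendsto_iSup_abs_sub_add {u : ℕ → ℝ} {a : ℝ} (hu : Tendsto u atTop (𝓝 a)) :
    Tendsto (fun m => ⨆ n, |u (n + m) - a|) atTop (𝓝 0) := by
  refine Metric.tendsto_atTop.2 fun ε hε => ?_
  obtain ⟨N, hN⟩ := Metric.tendsto_atTop.1 hu (ε / 2) (half_pos hε)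
  refine ⟨N, fun m hm => ?_⟩
  have hsup : ⨆ n, |u (n + m) - a| ≤ ε / 2 := ciSup_le fun n => (hN (n + m) (by omega)).le
  rw [Real.dist_eq, sub_zero, abs_of_nonneg (Real.iSup_nonneg fun _ => abs_nonneg _)]
  linarith

section WeakConvergence

variable {X : Type*} [TopologicalSpace X] [MeasurableSpace X]

def TendstoWeakly (μs : ℕ → Measure X) (μ : Measure X) : Prop :=
  ∀ f : X → ℝ, Continuous f → (∃ C, ∀ y, |f y| ≤ C) →
    Tendsto (fun n => ∫ y, f y ∂μs n) atTop (𝓝 (∫ y, f y ∂μ))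

variable [OpensMeasurableSpace X] {μs : ℕ → Measure X} [∀ n, IsFiniteMeasure (μs n)]
  {μ : Measure X} [IsFiniteMeasure μ] {G : ℕ → X → ℝ} {g : X → ℝ} {C : ℝ}

/-- The tail suprema `H m = ⨆ n ≥ m, |G n - g|` are continuous by equicontinuity and decrease
to `0`, so `∫ H m ∂μ` is small for large `m`; and `∫ H m ∂μs n → ∫ H m ∂μ` while `H m`
dominates `|G n - g|` for `n ≥ m`. -/
lemma TendstoWeakly.tendsto_integral_abs_sub (hμ : TendstoWeakly μs μ) (hG : Equicontinuous G)
    (hGC : ∀ n x, |G n x| ≤ C) (hg : ∀ x, Tendsto (G · x) atTop (𝓝 (g x))) :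
    Tendsto (fun n => ∫ x, |G n x - g x| ∂μs n) atTop (𝓝 0) := by
  have hgc : Continuous g := (tendsto_pi_nhds.2 hg).continuous_of_equicontinuous hG
  have hgC : ∀ x, |g x| ≤ C := fun x => le_of_tendsto' (hg x).abs fun n => hGC n x
  set H : ℕ → X → ℝ := fun m x => ⨆ n, |G (n + m) x - g x|
  have hdiff_le : ∀ n x, |G n x - g x| ≤ 2 * C := fun n x => by
    linarith [abs_sub (G n x) (g x), hGC n x, hgC x]
  have hbdd : ∀ m x, BddAbove (range fun n => |G (n + m) x - g x|) := fun m x =>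
    ⟨2 * C, by rintro _ ⟨n, rfl⟩; exact hdiff_le _ _⟩
  have hle_H : ∀ m n x, |G (n + m) x - g x| ≤ H m x := fun m n x => le_ciSup (hbdd m x) n
  have hH_nonneg : ∀ m x, 0 ≤ H m x := fun m x => (abs_nonneg _).trans (hle_H m 0 x)
  have hH_le : ∀ m x, H m x ≤ 2 * C := fun m x => ciSup_le fun n => hdiff_le _ _
  have hH_abs : ∀ m x, |H m x| ≤ 2 * C := fun m x => by
    rw [abs_of_nonneg (hH_nonneg m x)]; exact hH_le m x
  have hHc : ∀ m, Continuous (H m) := fun m =>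
    ((hG.comp (· + m)).abs_sub hgc).continuous_iSup (hbdd m)
  have hH_zero : ∀ x, Tendsto (H · x) atTop (𝓝 0) := fun x =>
    tendsto_iSup_abs_sub_add (u := (G · x)) (hg x)
  have hHμ : Tendsto (fun m => ∫ x, H m x ∂μ) atTop (𝓝 0) := by
    simpa using tendsto_integral_of_dominated_convergence (fun _ => 2 * C)
      (fun m => (hHc m).aestronglyMeasurable) (integrable_const _)
      (fun m => ae_of_all _ (hH_abs m)) (ae_of_all _ hH_zero)
  refine tendsto_order.2 ⟨fun a ha => Eventually.of_forall fun n =>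
    ha.trans_le (integral_nonneg fun _ => abs_nonneg _), fun ε hε => ?_⟩
  obtain ⟨m, hm⟩ := (hHμ.eventually (gt_mem_nhds hε)).exists
  filter_upwards [(hμ (H m) (hHc m) ⟨2 * C, hH_abs m⟩).eventually (gt_mem_nhds hm),
    eventually_ge_atTop m] with n hn hmn
  refine lt_of_le_of_lt (integral_mono ?_ ?_ fun x => ?_) hn
  · exact Integrable.of_bound (((hG.continuous n).sub hgc).abs.aestronglyMeasurable) (2 * C)
      (ae_of_all _ fun x => by simpa using hdiff_le n x)
  · exact Integrable.of_bound (hHc m).aestronglyMeasurable (2 * C) (ae_of_all _ (hH_abs m))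
  · simpa [Nat.sub_add_cancel hmn] using hle_H m (n - m) x

lemma TendstoWeakly.tendsto_integral_of_equicontinuous (hμ : TendstoWeakly μs μ)
    (hG : Equicontinuous G) (hGC : ∀ n x, |G n x| ≤ C)
    (hg : ∀ x, Tendsto (G · x) atTop (𝓝 (g x))) :
    Tendsto (fun n => ∫ x, G n x ∂μs n) atTop (𝓝 (∫ x, g x ∂μ)) := by
  have hgc : Continuous g := (tendsto_pi_nhds.2 hg).continuous_of_equicontinuous hG
  have hgC : ∀ x, |g x| ≤ C := fun x => le_of_tendsto' (hg x).abs fun n => hGC n x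
  have hsplit : ∀ n, ∫ x, G n x ∂μs n = ∫ x, (G n x - g x) ∂μs n + ∫ x, g x ∂μs n := fun n => by
    rw [integral_sub (Integrable.of_bound (hG.continuous n).aestronglyMeasurable C
      (ae_of_all _ (hGC n))) (Integrable.of_bound hgc.aestronglyMeasurable C (ae_of_all _ hgC))]
    ring
  have hdiff : Tendsto (fun n => ∫ x, (G n x - g x) ∂μs n) atTop (𝓝 0) :=
    squeeze_zero_norm (fun n => abs_integral_le_integral_abs)
      (hμ.tendsto_integral_abs_sub hG hGC hg)
  simpa only [hsplit, zero_add] using hdiff.add (hμ g hgc ⟨C, hgC⟩)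

end WeakConvergence

section IteratedKernels

variable {X : Type*} [MeasurableSpace X]

instance isMarkovKernel_iterKernel (P : Kernel X X) [IsMarkovKernel P] (k : ℕ) :
    IsMarkovKernel (iterKernel P k) := by
  induction k with
  | zero => rw [iterKernel]; infer_instance
  | succ k ih => rw [iterKernel]; infer_instance

lemma integral_iterKernel_succ (P : Kernel X X) [IsMarkovKernel P] (k : ℕ) (x : X)
    {f : X → ℝ} (hf : AEStronglyMeasurable f (iterKernel P (k + 1) x)) {C : ℝ}
    (hC : ∀ y, |f y| ≤ C) :
    ∫ y, f y ∂iterKernel P (k + 1) x = ∫ y, ∫ z, f z ∂P y ∂iterKernel P k x :=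
  Kernel.integral_comp (Integrable.of_bound hf C (ae_of_all _ hC))

variable [TopologicalSpace X]

lemma ae_forall_tendstoWeakly_of_equicontinuous [TopologicalSpace.SeparableSpace X] {Θ : Type*}
    (P : Θ → Kernel X X) {Ω : Type*} [MeasurableSpace Ω] {ν : Measure Ω} (θ : ℕ → Ω → Θ)
    (θ₀ : Θ) (hequi : ∀ f : X → ℝ, Continuous f → (∃ C, ∀ x, |f x| ≤ C) →
      Equicontinuous fun θ x => ∫ y, f y ∂P θ x)
    (hcvg : ∀ x, ∀ᵐ ω ∂ν, TendstoWeakly (fun n => P (θ n ω) x) (P θ₀ x)) :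
    ∀ᵐ ω ∂ν, ∀ x, TendstoWeakly (fun n => P (θ n ω) x) (P θ₀ x) := by
  obtain ⟨D, hDc, hD⟩ := TopologicalSpace.exists_countable_dense X
  filter_upwards [(ae_ball_iff hDc).2 fun x _ => hcvg x] with ω hω x f hf hfC
  exact ((hequi f hf hfC).comp (θ · ω)).tendsto_of_dense ((hequi f hf hfC).continuous θ₀) hD
    (fun y hy => hω y hy f hf hfC) x

lemma tendstoWeakly_iterKernel [OpensMeasurableSpace X] {Θ : Type*} (P : Θ → Kernel X X)
    [∀ θ, IsMarkovKernel (P θ)] {θ : ℕ → Θ} {θ₀ : Θ}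
    (hequi : ∀ f : X → ℝ, Continuous f → (∃ C, ∀ x, |f x| ≤ C) →
      Equicontinuous fun θ x => ∫ y, f y ∂P θ x)
    (hcvg : ∀ x, TendstoWeakly (fun n => P (θ n) x) (P θ₀ x)) (k : ℕ) (x : X) :
    TendstoWeakly (fun n => iterKernel (P (θ n)) k x) (iterKernel (P θ₀) k x) := by
  induction k generalizing x with
  | zero => exact fun _ _ _ => tendsto_const_nhds
  | succ k ih =>
    intro f hf ⟨C, hC⟩
    have hPf_le : ∀ θ y, |∫ z, f z ∂P θ y| ≤ C := fun θ y => by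
      simpa using norm_integral_le_of_norm_le_const (μ := P θ y) (f := f) (ae_of_all _ hC)
    simp only [integral_iterKernel_succ _ _ _ hf.aestronglyMeasurable hC]
    exact (ih x).tendsto_integral_of_equicontinuous ((hequi f hf ⟨C, hC⟩).comp θ)
      (fun n => hPf_le (θ n)) (fun y => hcvg y f hf ⟨C, hC⟩)

end IteratedKernels

theorem weak_convergence_iterated_kernels_general
    {X : Type*} [MetricSpace X] [TopologicalSpace.SeparableSpace X]
    [MeasurableSpace X] [BorelSpace X]
    {Θ : Type*} (P : Θ → Kernel X X) (hP : ∀ θ, IsMarkovKernel (P θ))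
    {Ω : Type*} [MeasurableSpace Ω] (Pm : Measure Ω)
    (θp : ℕ → Ω → Θ) (θstar : Θ)
    (hequi : ∀ f : X → ℝ, Continuous f → (∃ C, ∀ x, |f x| ≤ C) →
      Equicontinuous (fun θ : Θ => fun x : X => ∫ y, f y ∂((P θ) x)))
    (hcvg : ∀ x : X, ∀ᵐ ω ∂Pm, ∀ f : X → ℝ, Continuous f → (∃ C, ∀ y, |f y| ≤ C) →
      Tendsto (fun n => ∫ y, f y ∂((P (θp n ω)) x)) atTop
        (nhds (∫ y, f y ∂((P θstar) x)))) :
    ∀ᵐ ω ∂Pm, ∀ x : X, ∀ k : ℕ, 1 ≤ k → ∀ f : X → ℝ, Continuous f →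
      (∃ C, ∀ y, |f y| ≤ C) →
      Tendsto (fun n => ∫ y, f y ∂(iterKernel (P (θp n ω)) k x)) atTop
        (nhds (∫ y, f y ∂(iterKernel (P θstar) k x))) := by
  filter_upwards [ae_forall_tendstoWeakly_of_equicontinuous P θp θstar hequi hcvg] with ω hω x k _
  exact tendstoWeakly_iterKernel P hequi hω k x

/-- Let `{P_θ}` be Markov kernels on a Polish space `X` and `θ_n(ω)` a random
parameter sequence. If (a) for every bounded continuous `f` the family
`{P_θ f : θ ∈ Θ}` is equicontinuous, and (b) for each `x` there is a full set on
which `P_{θ_n(ω)}(x,·)` converges weakly to `P_{θ⋆}(x,·)`, then there is a single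
full set `Ω⋆` on which, for every `x`, every `k ≥ 1` and every bounded continuous
`f`, `P_{θ_n(ω)}^k f(x) → P_{θ⋆}^k f(x)`. -/
theorem weak_convergence_iterated_kernels
    {X : Type*} [MetricSpace X] [TopologicalSpace.SeparableSpace X] [CompleteSpace X]
    [MeasurableSpace X] [BorelSpace X]
    {Θ : Type*} (P : Θ → Kernel X X) (hP : ∀ θ, IsMarkovKernel (P θ))
    {Ω : Type*} [MeasurableSpace Ω] (Pm : Measure Ω) [IsProbabilityMeasure Pm]
    (θp : ℕ → Ω → Θ) (θstar : Θ)
    (hequi : ∀ f : X → ℝ, Continuous f → (∃ C, ∀ x, |f x| ≤ C) →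
      Equicontinuous (fun θ : Θ => fun x : X => ∫ y, f y ∂((P θ) x)))
    (hcvg : ∀ x : X, ∀ᵐ ω ∂Pm, ∀ f : X → ℝ, Continuous f → (∃ C, ∀ y, |f y| ≤ C) →
      Tendsto (fun n => ∫ y, f y ∂((P (θp n ω)) x)) atTop
        (nhds (∫ y, f y ∂((P θstar) x)))) :
    ∀ᵐ ω ∂Pm, ∀ x : X, ∀ k : ℕ, 1 ≤ k → ∀ f : X → ℝ, Continuous f →
      (∃ C, ∀ y, |f y| ≤ C) →
      Tendsto (fun n => ∫ y, f y ∂(iterKernel (P (θp n ω)) k x)) atTop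
        (nhds (∫ y, f y ∂(iterKernel (P θstar) k x))) :=
  weak_convergence_iterated_kernels_general P hP Pm θp θstar hequi hcvg
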